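/- Let Q be a finite set of positive integers. Then there exist finitely many positive integers m_1,...,m_s and, for each k, an infinite set S_k of positive integers such that: (1) for every k and every j ∈ S_k, no q ∈ Q with q not dividing m_k divides j·m_k; and (2) every positive integer n can be written as n = j·m_k for some k and some j ∈ S_k. (Here one may take {m_1,...,m_s} to be the set of least common multiples of nonempty subsets of Q, together with 1.) -/
import Mathlib

lemma lcm_pos_aux (T : Finset ℕ) (h : ∀ q ∈ T, 0 < q) : 0 < T.lcm id := by
  induction T using Finset.induction with
  | empty => simp
  | @insert a s _ ih =>
    rw [Finset.lcm_insert]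
    have ha : (a : ℕ) ≠ 0 := (h a (Finset.mem_insert_self a s)).ne'
    have hs : s.lcm id ≠ 0 := (ih (fun q hq => h q (Finset.mem_insert_of_mem hq))).ne'
    exact Nat.pos_of_ne_zero (Nat.lcm_ne_zero ha hs)

/-- Gromoll–Meyer covering lemma: for a finite set `Q` of positive integers, there are
finitely many positive integers `m 1, ..., m s` and infinite sets `S k` of positive integers
such that (1) for `j ∈ S k`, no `q ∈ Q` with `q ∤ m k` divides `j * m k`, and (2) every
positive integer is of the form `j * m k` with `j ∈ S k`. -/
theorem stmt0 (Q : Finset ℕ) (hQ : ∀ q ∈ Q, 0 < q) :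
    ∃ (s : ℕ) (m : Fin s → ℕ) (S : Fin s → Set ℕ),
      (∀ k, 0 < m k) ∧ (∀ k, (S k).Infinite) ∧ (∀ k, ∀ j ∈ S k, 0 < j) ∧
      (∀ k, ∀ j ∈ S k, ∀ q ∈ Q, ¬ q ∣ m k → ¬ q ∣ j * m k) ∧
      (∀ n : ℕ, 0 < n → ∃ k, ∃ j ∈ S k, n = j * m k) := by
  classical
  set P := Q.powerset with hP
  set L := Q.lcm id with hL
  have hLpos : 0 < L := lcm_pos_aux Q hQ
  refine ⟨P.card, fun k => ((P.equivFin.symm k : Finset ℕ)).lcm id,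
    fun k => {j | 0 < j ∧ ∀ q ∈ Q, q ∣ j * ((P.equivFin.symm k : Finset ℕ)).lcm id →
      q ∣ ((P.equivFin.symm k : Finset ℕ)).lcm id}, ?_, ?_, ?_, ?_, ?_⟩
  · intro k
    refine lcm_pos_aux _ (fun q hq => hQ q ?_)
    exact Finset.mem_powerset.mp (P.equivFin.symm k).2 hq
  · intro k
    set M := ((P.equivFin.symm k : Finset ℕ)).lcm id
    apply Set.infinite_of_injective_forall_mem (f := fun i : ℕ => 1 + i * L)
    · intro a b hab
      simpa [hLpos.ne', Nat.add_right_cancel_iff] using hab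
    · intro i
      refine ⟨by positivity, fun q hq hdvd => ?_⟩
      have hqL : q ∣ i * L := Dvd.dvd.mul_left (Finset.dvd_lcm hq) i
      have : q ∣ i * L * M := hqL.mul_right M
      have : q ∣ (1 + i * L) * M - i * L * M := Nat.dvd_sub hdvd this
      simpa [add_mul, Nat.add_sub_cancel] using this
  · intro k j hj; exact hj.1
  · intro k j hj q hq hnd hd; exact hnd (hj.2 q hq hd)
  · intro n hn
    set T := Q.filter (· ∣ n) with hT
    have hTP : T ∈ P := Finset.mem_powerset.mpr (Finset.filter_subset _ _)
    refine ⟨P.equivFin ⟨T, hTP⟩, n / T.lcm id, ?_, ?_⟩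
    · have hsymm : (P.equivFin.symm (P.equivFin ⟨T, hTP⟩) : Finset ℕ) = T := by
        simp
      have hMdvd : T.lcm id ∣ n :=
        Finset.lcm_dvd (fun q hq => (Finset.mem_filter.mp hq).2)
      have hMpos : 0 < T.lcm id :=
        lcm_pos_aux T (fun q hq => hQ q (Finset.mem_filter.mp hq).1)
      simp only [Set.mem_setOf_eq, hsymm]
      refine ⟨Nat.div_pos (Nat.le_of_dvd hn hMdvd) hMpos, fun q hq hdvd => ?_⟩
      rw [Nat.div_mul_cancel hMdvd] at hdvd
      exact Finset.dvd_lcm (Finset.mem_filter.mpr ⟨hq, hdvd⟩)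
    · have hsymm : (P.equivFin.symm (P.equivFin ⟨T, hTP⟩) : Finset ℕ) = T := by
        simp
      simp only [hsymm]
      exact (Nat.div_mul_cancel (Finset.lcm_dvd
        (fun q hq => (Finset.mem_filter.mp hq).2))).symm
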